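/- Let G be a finite group, ρ : G → GL(V) a nontrivial irreducible finite-dimensional complex representation, and λ ∈ V* nonzero. Then the subspace L_{V,ρ,λ} = { f_v : v ∈ V } of the space of functions G → ℂ satisfies: (i) L_{V,ρ,λ} ⊆ K = { f : G → ℂ | f(1) = 0 }; (ii) T_h(f_v) = f_{ρ(h)v} for all h ∈ G and v ∈ V, so L_{V,ρ,λ} is invariant under every T_h; (iii) the linear map v ↦ f_v is injective, so dim L_{V,ρ,λ} = dim V; and (iv) L_{V,ρ,λ} is minimal among nonzero subspaces of K invariant under all T_h (every nonzero T-invariant subspace contained in it equals it). -/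
import Mathlib


noncomputable section

variable {G : Type*} [Group G] [Fintype G]
variable {V : Type*} [AddCommGroup V] [Module ℂ V]

/-- The operator `T_h` on functions `G → ℂ`: `(T_h f)(g) = f(gh) - f(h)`. -/
def Tw (G : Type*) [Group G] (h : G) : (G → ℂ) →ₗ[ℂ] (G → ℂ) :=
  LinearMap.pi fun g => (LinearMap.proj (g * h) : (G → ℂ) →ₗ[ℂ] ℂ) - (LinearMap.proj h : (G → ℂ) →ₗ[ℂ] ℂ)

/-- The linear map `v ↦ f_v`, where `f_v(g) = λ(ρ(g)v) - λ(v)`. -/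
def Fmap (ρ : Representation ℂ G V) (lam : V →ₗ[ℂ] ℂ) : V →ₗ[ℂ] (G → ℂ) :=
  LinearMap.pi fun g => lam ∘ₗ ρ g - lam

theorem stmt4 [FiniteDimensional ℂ V] (ρ : Representation ℂ G V)
    (hirr : ∀ U : Submodule ℂ V, (∀ g : G, ∀ v ∈ U, ρ g v ∈ U) → U = ⊥ ∨ U = ⊤)
    (hnontriv : ∃ g : G, ρ g ≠ 1)
    (lam : V →ₗ[ℂ] ℂ) (hlam : lam ≠ 0) :
    (∀ v : V, Fmap ρ lam v 1 = 0) ∧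
    (∀ (h : G) (v : V), Tw G h (Fmap ρ lam v) = Fmap ρ lam (ρ h v)) ∧
    (∀ h : G, ∀ f ∈ LinearMap.range (Fmap ρ lam),
      Tw G h f ∈ LinearMap.range (Fmap ρ lam)) ∧
    Function.Injective (Fmap ρ lam) ∧
    Module.finrank ℂ (LinearMap.range (Fmap ρ lam)) = Module.finrank ℂ V ∧
    (∀ L' : Submodule ℂ (G → ℂ), L' ≤ LinearMap.range (Fmap ρ lam) →
      (∀ h : G, ∀ f ∈ L', Tw G h f ∈ L') → L' ≠ ⊥ → L' = LinearMap.range (Fmap ρ lam)) := by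
  have hF : ∀ (v : V) (g : G), Fmap ρ lam v g = lam (ρ g v) - lam v := fun v g => rfl
  have hT : ∀ (f : G → ℂ) (h g : G), Tw G h f g = f (g * h) - f h := fun f h g => rfl
  have h2 : ∀ (h : G) (v : V), Tw G h (Fmap ρ lam v) = Fmap ρ lam (ρ h v) := by
    intro h v
    funext g
    simp only [hT, hF, map_mul, Module.End.mul_apply]
    ring
  have hinj : Function.Injective (Fmap ρ lam) := by
    rw [← LinearMap.ker_eq_bot]
    rcases hirr (LinearMap.ker (Fmap ρ lam)) (fun g v hv => by
        rw [LinearMap.mem_ker] at hv ⊢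
        rw [← h2, hv, map_zero]) with hk | hk
    · exact hk
    · exfalso
      have hz : Fmap ρ lam = 0 := LinearMap.ker_eq_top.mp hk
      have hall : ∀ (g : G) (v : V), lam (ρ g v) = lam v := by
        intro g v
        have hzv : Fmap ρ lam v g = 0 := by rw [hz]; rfl
        rw [hF] at hzv
        linear_combination hzv
      rcases hirr (LinearMap.ker lam) (fun g v hv => by
          rw [LinearMap.mem_ker] at hv ⊢
          rw [hall]; exact hv) with hl | hl
      · obtain ⟨g, hg⟩ := hnontriv
        apply hg
        have hlinj : Function.Injective lam := LinearMap.ker_eq_bot.mp hl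
        ext v
        exact hlinj (hall g v)
      · exact hlam (LinearMap.ker_eq_top.mp hl)
  refine ⟨fun v => by simp [hF], h2, ?_, hinj, LinearMap.finrank_range_of_inj hinj, ?_⟩
  · rintro h f ⟨v, rfl⟩
    exact ⟨ρ h v, (h2 h v).symm⟩
  · intro L' hle hinvL hne
    have hcomap : Submodule.comap (Fmap ρ lam) L' = ⊤ := by
      rcases hirr (Submodule.comap (Fmap ρ lam) L') (fun g v hv => by
          rw [Submodule.mem_comap] at hv ⊢
          rw [← h2]
          exact hinvL g _ hv) with hc | hc
      · exfalso
        apply hne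
        rw [eq_bot_iff]
        intro f hf
        obtain ⟨v, rfl⟩ := hle hf
        have hv : v ∈ Submodule.comap (Fmap ρ lam) L' := hf
        rw [hc, Submodule.mem_bot] at hv
        simp [hv]
      · exact hc
    apply le_antisymm hle
    rintro f ⟨v, rfl⟩
    have : v ∈ Submodule.comap (Fmap ρ lam) L' := hcomap ▸ Submodule.mem_top
    exact this

end
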